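/- arXiv:2407.15095 — 3 statements merged into one kernel-verified Lean document; each statement's English description precedes it below -/
import Mathlib

section
/- Let U ⊆ ℝ² be open and f : U → ℝ be C³. Define the vector field X : U → ℝ² by X = (∂₂f, −∂₁f). Then on U: (i) div X := ∂₁X₁ + ∂₂X₂ = 0; and (ii) div(X·∇X) = −2·det Hess f, where (X·∇X)ᵢ := X₁∂₁Xᵢ + X₂∂₂Xᵢ and det Hess f := ∂₁₁f·∂₂₂f − (∂₁₂f)². Consequently, X satisfies the flat Bao–Ratiu equations div X = 0 and div(X·∇X) = 0 on U if and only if det Hess f = 0 on U. -/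
/-!
For a `C²` planar field `X`, the product rule and the symmetry of second derivatives give
`div (X·∇X) = X·∇(div X) + (div X)² - 2 det DX`.
For `X = (∂₂ f, -∂₁ f)`, Clairaut's theorem makes `div X` vanish identically on the open set `U`,
so only `-2 det DX` survives there, and `det DX = det Hess f`.
-/

/-- First partial derivative of a function on `ℝ × ℝ`. -/
noncomputable def pd1 (f : ℝ × ℝ → ℝ) (x : ℝ × ℝ) : ℝ := fderiv ℝ f x (1, 0)

/-- Second partial derivative of a function on `ℝ × ℝ`. -/
noncomputable def pd2 (f : ℝ × ℝ → ℝ) (x : ℝ × ℝ) : ℝ := fderiv ℝ f x (0, 1)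

open Topology

section PartialDerivatives

variable {f g : ℝ × ℝ → ℝ} {x : ℝ × ℝ}

lemma pd1_fun_neg (f : ℝ × ℝ → ℝ) (x : ℝ × ℝ) : pd1 (fun y => -f y) x = -pd1 f x := by
  simp [pd1]

lemma pd2_fun_neg (f : ℝ × ℝ → ℝ) (x : ℝ × ℝ) : pd2 (fun y => -f y) x = -pd2 f x := by
  simp [pd2]

lemma pd1_fun_add (hf : DifferentiableAt ℝ f x) (hg : DifferentiableAt ℝ g x) :
    pd1 (fun y => f y + g y) x = pd1 f x + pd1 g x := by
  simp [pd1, fderiv_fun_add hf hg]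

lemma pd2_fun_add (hf : DifferentiableAt ℝ f x) (hg : DifferentiableAt ℝ g x) :
    pd2 (fun y => f y + g y) x = pd2 f x + pd2 g x := by
  simp [pd2, fderiv_fun_add hf hg]

lemma pd1_fun_mul (hf : DifferentiableAt ℝ f x) (hg : DifferentiableAt ℝ g x) :
    pd1 (fun y => f y * g y) x = pd1 f x * g x + f x * pd1 g x := by
  simp only [pd1, fderiv_fun_mul hf hg, add_apply,
    smul_apply, smul_eq_mul]
  ring

lemma pd2_fun_mul (hf : DifferentiableAt ℝ f x) (hg : DifferentiableAt ℝ g x) :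
    pd2 (fun y => f y * g y) x = pd2 f x * g x + f x * pd2 g x := by
  simp only [pd2, fderiv_fun_mul hf hg, add_apply,
    smul_apply, smul_eq_mul]
  ring

lemma ContDiffAt.pd1 {n : ℕ} (hf : ContDiffAt ℝ (n + 1) f x) : ContDiffAt ℝ n (pd1 f) x :=
  hf.fderiv_right_succ.clm_apply contDiffAt_const

lemma ContDiffAt.pd2 {n : ℕ} (hf : ContDiffAt ℝ (n + 1) f x) : ContDiffAt ℝ n (pd2 f) x :=
  hf.fderiv_right_succ.clm_apply contDiffAt_const

lemma fderiv_fderiv_apply_const {v : ℝ × ℝ} (hf : DifferentiableAt ℝ (fderiv ℝ f) x)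
    (w : ℝ × ℝ) : fderiv ℝ (fun y => fderiv ℝ f y v) x w = fderiv ℝ (fderiv ℝ f) x w v := by
  simp [fderiv_clm_apply hf (differentiableAt_const v)]

lemma pd1_pd2_comm (hf : ContDiffAt ℝ 2 f x) : pd1 (pd2 f) x = pd2 (pd1 f) x := by
  have hd : DifferentiableAt ℝ (fderiv ℝ f) x :=
    (hf.fderiv_right_succ (n := 1)).differentiableAt one_ne_zero
  have hsymm := hf.isSymmSndFDerivAt (by simp [minSmoothness_of_isRCLikeNormedField])
  change fderiv ℝ (fun y => fderiv ℝ f y (0, 1)) x (1, 0)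
    = fderiv ℝ (fun y => fderiv ℝ f y (1, 0)) x (0, 1)
  rw [fderiv_fderiv_apply_const hd, fderiv_fderiv_apply_const hd]
  exact hsymm _ _

end PartialDerivatives

section VectorFields

noncomputable def divergence (X : ℝ × ℝ → ℝ × ℝ) (x : ℝ × ℝ) : ℝ :=
  pd1 (fun y => (X y).1) x + pd2 (fun y => (X y).2) x

/-- `∇_X X` for the flat connection. -/
noncomputable def convectiveDeriv (X : ℝ × ℝ → ℝ × ℝ) (x : ℝ × ℝ) : ℝ × ℝ :=
  ((X x).1 * pd1 (fun y => (X y).1) x + (X x).2 * pd2 (fun y => (X y).1) x,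
    (X x).1 * pd1 (fun y => (X y).2) x + (X x).2 * pd2 (fun y => (X y).2) x)

noncomputable def jacobianDet (X : ℝ × ℝ → ℝ × ℝ) (x : ℝ × ℝ) : ℝ :=
  pd1 (fun y => (X y).1) x * pd2 (fun y => (X y).2) x
    - pd2 (fun y => (X y).1) x * pd1 (fun y => (X y).2) x

theorem divergence_convectiveDeriv {X : ℝ × ℝ → ℝ × ℝ} {x : ℝ × ℝ}
    (hX : ContDiffAt ℝ 2 X x) :
    divergence (convectiveDeriv X) x
      = (X x).1 * pd1 (divergence X) x + (X x).2 * pd2 (divergence X) x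
        + divergence X x ^ 2 - 2 * jacobianDet X x := by
  set P : ℝ × ℝ → ℝ := fun y => (X y).1
  set Q : ℝ × ℝ → ℝ := fun y => (X y).2
  have hP : ContDiffAt ℝ 2 P x := hX.fst
  have hQ : ContDiffAt ℝ 2 Q x := hX.snd
  have dP := hP.differentiableAt two_ne_zero
  have dQ := hQ.differentiableAt two_ne_zero
  have dP₁ := hP.pd1.differentiableAt one_ne_zero
  have dP₂ := hP.pd2.differentiableAt one_ne_zero
  have dQ₁ := hQ.pd1.differentiableAt one_ne_zero
  have dQ₂ := hQ.pd2.differentiableAt one_ne_zero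
  change pd1 (fun y => P y * pd1 P y + Q y * pd2 P y) x
      + pd2 (fun y => P y * pd1 Q y + Q y * pd2 Q y) x
    = P x * pd1 (fun y => pd1 P y + pd2 Q y) x + Q x * pd2 (fun y => pd1 P y + pd2 Q y) x
      + (pd1 P x + pd2 Q x) ^ 2 - 2 * (pd1 P x * pd2 Q x - pd2 P x * pd1 Q x)
  rw [pd1_fun_add (dP.fun_mul dP₁) (dQ.fun_mul dP₂), pd1_fun_mul dP dP₁, pd1_fun_mul dQ dP₂,
    pd2_fun_add (dP.fun_mul dQ₁) (dQ.fun_mul dQ₂), pd2_fun_mul dP dQ₁, pd2_fun_mul dQ dQ₂,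
    pd1_fun_add dP₁ dQ₂, pd2_fun_add dP₁ dQ₂, pd1_pd2_comm hP, pd1_pd2_comm hQ]
  ring

end VectorFields

section StreamFunctions

variable {f : ℝ × ℝ → ℝ} {x : ℝ × ℝ}

noncomputable def streamField (f : ℝ × ℝ → ℝ) (x : ℝ × ℝ) : ℝ × ℝ := (pd2 f x, -pd1 f x)

noncomputable def hessianDet (f : ℝ × ℝ → ℝ) (x : ℝ × ℝ) : ℝ :=
  pd1 (pd1 f) x * pd2 (pd2 f) x - pd1 (pd2 f) x ^ 2

lemma ContDiffAt.streamField {n : ℕ} (hf : ContDiffAt ℝ (n + 1) f x) :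
    ContDiffAt ℝ n (streamField f) x :=
  hf.pd2.prodMk hf.pd1.neg

lemma divergence_streamField (hf : ContDiffAt ℝ 2 f x) : divergence (streamField f) x = 0 := by
  simp only [divergence, streamField, pd2_fun_neg, pd1_pd2_comm hf, add_neg_cancel]

lemma jacobianDet_streamField (hf : ContDiffAt ℝ 2 f x) :
    jacobianDet (streamField f) x = hessianDet f x := by
  simp only [jacobianDet, hessianDet, streamField, pd1_fun_neg, pd2_fun_neg, pd1_pd2_comm hf]
  ring

theorem divergence_convectiveDeriv_streamField (hf : ContDiffAt ℝ 3 f x) :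
    divergence (convectiveDeriv (streamField f)) x = -2 * hessianDet f x := by
  have hdiv : divergence (streamField f) =ᶠ[𝓝 x] fun _ => 0 := by
    filter_upwards [hf.eventually (by simp)] with y hy
    exact divergence_streamField (hy.of_le (by norm_num))
  have hgrad : fderiv ℝ (divergence (streamField f)) x = 0 := by
    rw [hdiv.fderiv_eq, fderiv_const_apply]
  rw [divergence_convectiveDeriv (hf.streamField (n := 2)), jacobianDet_streamField
    (hf.of_le (by norm_num)), hdiv.eq_of_nhds]
  simp [pd1, pd2, hgrad]

end StreamFunctions

/-- If `U ⊆ ℝ²` is open and `f : U → ℝ` is `C³`, the field `X = (∂₂ f, −∂₁ f)` satisfies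
`div X = 0` and `div (X·∇X) = −2 det Hess f` on `U`; hence `X` satisfies the flat
Bao–Ratiu equations on `U` iff `det Hess f = 0` on `U`. -/
theorem stmt0 (U : Set (ℝ × ℝ)) (hU : IsOpen U) (f : ℝ × ℝ → ℝ)
    (hf : ContDiffOn ℝ 3 f U)
    (X : ℝ × ℝ → ℝ × ℝ)
    (hX : X = fun x => (pd2 f x, -(pd1 f x))) :
    (∀ x ∈ U, pd1 (fun y => (X y).1) x + pd2 (fun y => (X y).2) x = 0) ∧
    (∀ x ∈ U,
      pd1 (fun y => (X y).1 * pd1 (fun z => (X z).1) y + (X y).2 * pd2 (fun z => (X z).1) y) x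
        + pd2 (fun y => (X y).1 * pd1 (fun z => (X z).2) y
              + (X y).2 * pd2 (fun z => (X z).2) y) x
      = -2 * (pd1 (pd1 f) x * pd2 (pd2 f) x - (pd1 (pd2 f) x) ^ 2)) ∧
    ((∀ x ∈ U,
        pd1 (fun y => (X y).1) x + pd2 (fun y => (X y).2) x = 0 ∧
        pd1 (fun y => (X y).1 * pd1 (fun z => (X z).1) y + (X y).2 * pd2 (fun z => (X z).1) y) x
          + pd2 (fun y => (X y).1 * pd1 (fun z => (X z).2) y
                + (X y).2 * pd2 (fun z => (X z).2) y) x = 0)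
      ↔ (∀ x ∈ U, pd1 (pd1 f) x * pd2 (pd2 f) x - (pd1 (pd2 f) x) ^ 2 = 0)) := by
  obtain rfl : X = streamField f := hX
  have hf₃ : ∀ x ∈ U, ContDiffAt ℝ 3 f x := fun x hx => hf.contDiffAt (hU.mem_nhds hx)
  have hdiv : ∀ x ∈ U, divergence (streamField f) x = 0 := fun x hx =>
    divergence_streamField ((hf₃ x hx).of_le (by norm_num))
  have hconv : ∀ x ∈ U, divergence (convectiveDeriv (streamField f)) x = -2 * hessianDet f x :=
    fun x hx => divergence_convectiveDeriv_streamField (hf₃ x hx)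
  refine ⟨hdiv, hconv, fun h x hx => ?_, fun h x hx => ⟨hdiv x hx, ?_⟩⟩
  · have h₀ : divergence (convectiveDeriv (streamField f)) x = 0 := (h x hx).2
    change hessianDet f x = 0
    linarith [hconv x hx]
  · change divergence (convectiveDeriv (streamField f)) x = 0
    rw [hconv x hx, show hessianDet f x = 0 from h x hx, mul_zero]
end

section
/- Let K : ℝ² → ℝ be C² with K(0) = 2. Then there exist real numbers a, b, c, d such that the function ĥ(x₁,x₂) := x₁² + 3x₁x₂ + (5/2)x₂² + a x₁³ + b x₁² x₂ + c x₁ x₂² + d x₂³ satisfies: there are constants C > 0 and r > 0 with |det Hess ĥ(x) − (K(x)/2)(1 + 2∂₁ĥ(x) + |∇ĥ(x)|²)| ≤ C(x₁² + x₂²) for all |x| ≤ r. Moreover, there are infinitely many choices of (a,b,c,d) with this property. -/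
/-- Determinant of the Hessian: `∂₁₁f·∂₂₂f − (∂₁₂f)²`. -/
noncomputable def detHess (f : ℝ × ℝ → ℝ) (x : ℝ × ℝ) : ℝ :=
  pd1 (pd1 f) x * pd2 (pd2 f) x - (pd1 (pd2 f) x) ^ 2

/-- `h` is an approximate solution of the Euclidean-model Bao–Ratiu Monge–Ampère equation
with coefficient `K`, with quadratic error near the origin. -/
noncomputable def IsQuadApproxSol (K h : ℝ × ℝ → ℝ) : Prop :=
  ∃ C > (0 : ℝ), ∃ r > (0 : ℝ), ∀ x : ℝ × ℝ, Real.sqrt (x.1 ^ 2 + x.2 ^ 2) ≤ r →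
    |detHess h x
        - K x / 2 * (1 + 2 * pd1 h x + ((pd1 h x) ^ 2 + (pd2 h x) ^ 2))|
      ≤ C * (x.1 ^ 2 + x.2 ^ 2)

/-- The cubic ansatz for the initial approximate solution in the elliptic case. -/
noncomputable def hhatE (a b c d : ℝ) : ℝ × ℝ → ℝ :=
  fun x => x.1 ^ 2 + 3 * x.1 * x.2 + (5 / 2) * x.2 ^ 2
    + a * x.1 ^ 3 + b * x.1 ^ 2 * x.2 + c * x.1 * x.2 ^ 2 + d * x.2 ^ 3

/-! The error `E = det Hess ĥ − (K/2)(1 + 2∂₁ĥ + |∇ĥ|²)` is `C²` near the origin and vanishes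
there, since `det Hess ĥ(0) = 2·5 − 3² = 1 = K(0)/2`. Its gradient at the origin is affine in the
cubic coefficients, `(30a − 12b + 4c − 4 − ∂₁K(0)/2, 10b − 12c + 12d − 6 − ∂₂K(0)/2)`, so it
vanishes on a two-parameter family of `(a, b, c, d)`. For those, the mean value inequality applied
to `E` on balls around `0`, where `‖DE(y)‖ = O(|y|)`, gives `E(x) = O(|x|²)`. -/

open Asymptotics Topology

theorem ContDiffAt.isBigO_norm_sub_sq {E F : Type*} [NormedAddCommGroup E] [NormedSpace ℝ E]
    [NormedAddCommGroup F] [NormedSpace ℝ F] {f : E → F} {x₀ : E}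
    (hf : ContDiffAt ℝ 2 f x₀) (h0 : f x₀ = 0) (h1 : fderiv ℝ f x₀ = 0) :
    f =O[𝓝 x₀] fun x => ‖x - x₀‖ ^ 2 := by
  have hdiff : ∀ᶠ y in 𝓝 x₀, DifferentiableAt ℝ f y :=
    (hf.eventually (by simp)).mono fun y hy => hy.differentiableAt (by simp)
  obtain ⟨C, hC0, hC⟩ := ((hf.fderiv_right (m := 1) le_rfl).differentiableAt
    one_ne_zero).hasFDerivAt.isBigO_sub.exists_pos
  obtain ⟨ε, hε, hball⟩ := Metric.eventually_nhds_iff_ball.1 (hdiff.and hC.bound)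
  refine IsBigO.of_bound C (Metric.eventually_nhds_iff_ball.2 ⟨ε, hε, fun x hx => ?_⟩)
  have hsub : Metric.closedBall x₀ ‖x - x₀‖ ⊆ Metric.ball x₀ ε :=
    Metric.closedBall_subset_ball (by rwa [← dist_eq_norm])
  have hderiv : ∀ y ∈ Metric.closedBall x₀ ‖x - x₀‖, ‖fderiv ℝ f y‖ ≤ C * ‖x - x₀‖ := by
    intro y hy
    have := (hball y (hsub hy)).2
    rw [h1, sub_zero] at this
    exact this.trans (by gcongr; rwa [← dist_eq_norm])
  have hmvt := (convex_closedBall x₀ ‖x - x₀‖).norm_image_sub_le_of_norm_fderiv_le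
    (fun y hy => (hball y (hsub hy)).1) hderiv
    (Metric.mem_closedBall_self (norm_nonneg _)) (by rw [Metric.mem_closedBall, dist_eq_norm])
  rw [h0, sub_zero] at hmvt
  simpa [sq, mul_assoc] using hmvt

theorem ContinuousLinearMap.eq_zero_of_apply_one_zero_of_apply_zero_one {R M : Type*} [Semiring R]
    [TopologicalSpace R] [AddCommMonoid M] [TopologicalSpace M] [Module R M] {L : R × R →L[R] M}
    (h1 : L (1, 0) = 0) (h2 : L (0, 1) = 0) : L = 0 := by
  ext
  · simpa using h1
  · simpa using h2

noncomputable def baoRatiuError (K h : ℝ × ℝ → ℝ) (x : ℝ × ℝ) : ℝ :=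
  detHess h x - K x / 2 * (1 + 2 * pd1 h x + ((pd1 h x) ^ 2 + (pd2 h x) ^ 2))

theorem isQuadApproxSol_of_isBigO {K h : ℝ × ℝ → ℝ}
    (hO : baoRatiuError K h =O[𝓝 0] fun x => ‖x‖ ^ 2) : IsQuadApproxSol K h := by
  obtain ⟨C, hC0, hC⟩ := hO.exists_pos
  obtain ⟨ε, hε, hball⟩ := Metric.eventually_nhds_iff_ball.1 hC.bound
  refine ⟨C, hC0, ε / 2, by positivity, fun x hx => ?_⟩
  have hnorm : ‖x‖ ≤ Real.sqrt (x.1 ^ 2 + x.2 ^ 2) := by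
    rw [Prod.norm_def]
    exact max_le (Real.abs_le_sqrt (by nlinarith)) (Real.abs_le_sqrt (by nlinarith))
  have hx := hball x (by rw [Metric.mem_ball, dist_zero_right]; linarith)
  rw [norm_pow, norm_norm, Real.norm_eq_abs] at hx
  refine hx.trans (mul_le_mul_of_nonneg_left ?_ hC0.le)
  calc ‖x‖ ^ 2 ≤ Real.sqrt (x.1 ^ 2 + x.2 ^ 2) ^ 2 := by gcongr
    _ = x.1 ^ 2 + x.2 ^ 2 := Real.sq_sqrt (by positivity)

section hhatE

attribute [local simp] fderiv_fun_add fderiv_fun_sub fderiv_fun_mul fderiv_fun_pow fderiv_fst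
  fderiv_snd

variable (a b c d : ℝ)

theorem pd1_hhatE : pd1 (hhatE a b c d) =
    fun x => 2 * x.1 + 3 * x.2 + 3 * a * x.1 ^ 2 + 2 * b * x.1 * x.2 + c * x.2 ^ 2 := by
  funext x
  unfold pd1 hhatE
  simp (disch := fun_prop)
  ring

theorem pd2_hhatE : pd2 (hhatE a b c d) =
    fun x => 3 * x.1 + 5 * x.2 + b * x.1 ^ 2 + 2 * c * x.1 * x.2 + 3 * d * x.2 ^ 2 := by
  funext x
  unfold pd2 hhatE
  simp (disch := fun_prop)
  ring

theorem detHess_hhatE (x : ℝ × ℝ) : detHess (hhatE a b c d) x =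
    (2 + 6 * a * x.1 + 2 * b * x.2) * (5 + 2 * c * x.1 + 6 * d * x.2)
      - (3 + 2 * b * x.1 + 2 * c * x.2) ^ 2 := by
  rw [detHess, pd1_hhatE, pd2_hhatE]
  unfold pd1 pd2
  simp (disch := fun_prop)
  ring

theorem baoRatiuError_hhatE (K : ℝ × ℝ → ℝ) : baoRatiuError K (hhatE a b c d) = fun x =>
    (2 + 6 * a * x.1 + 2 * b * x.2) * (5 + 2 * c * x.1 + 6 * d * x.2)
      - (3 + 2 * b * x.1 + 2 * c * x.2) ^ 2
      - K x / 2 * (1 + 2 * (2 * x.1 + 3 * x.2 + 3 * a * x.1 ^ 2 + 2 * b * x.1 * x.2 + c * x.2 ^ 2)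
        + ((2 * x.1 + 3 * x.2 + 3 * a * x.1 ^ 2 + 2 * b * x.1 * x.2 + c * x.2 ^ 2) ^ 2
          + (3 * x.1 + 5 * x.2 + b * x.1 ^ 2 + 2 * c * x.1 * x.2 + 3 * d * x.2 ^ 2) ^ 2)) := by
  funext x
  rw [baoRatiuError, detHess_hhatE, pd1_hhatE, pd2_hhatE]

variable {K : ℝ × ℝ → ℝ}

theorem baoRatiuError_hhatE_zero (hK0 : K 0 = 2) : baoRatiuError K (hhatE a b c d) 0 = 0 := by
  rw [baoRatiuError_hhatE]
  norm_num [hK0]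

theorem pd1_baoRatiuError_hhatE_zero (hK : DifferentiableAt ℝ K 0) (hK0 : K 0 = 2) :
    pd1 (baoRatiuError K (hhatE a b c d)) 0 = 30 * a - 12 * b + 4 * c - 4 - pd1 K 0 / 2 := by
  rw [baoRatiuError_hhatE]
  unfold pd1
  simp (disch := fun_prop) [div_eq_mul_inv, hK0]
  ring

theorem pd2_baoRatiuError_hhatE_zero (hK : DifferentiableAt ℝ K 0) (hK0 : K 0 = 2) :
    pd2 (baoRatiuError K (hhatE a b c d)) 0 = 10 * b - 12 * c + 12 * d - 6 - pd2 K 0 / 2 := by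
  rw [baoRatiuError_hhatE]
  unfold pd2
  simp (disch := fun_prop) [div_eq_mul_inv, hK0]
  ring

theorem isQuadApproxSol_hhatE (hK : ContDiffAt ℝ 2 K 0) (hK0 : K 0 = 2)
    (h1 : 30 * a - 12 * b + 4 * c = 4 + pd1 K 0 / 2)
    (h2 : 10 * b - 12 * c + 12 * d = 6 + pd2 K 0 / 2) :
    IsQuadApproxSol K (hhatE a b c d) := by
  have hKdiff : DifferentiableAt ℝ K 0 := hK.differentiableAt two_ne_zero
  have hsmooth : ContDiffAt ℝ 2 (baoRatiuError K (hhatE a b c d)) 0 := by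
    rw [baoRatiuError_hhatE]
    fun_prop
  have hcrit : fderiv ℝ (baoRatiuError K (hhatE a b c d)) 0 = 0 := by
    apply ContinuousLinearMap.eq_zero_of_apply_one_zero_of_apply_zero_one
    · rw [← pd1, pd1_baoRatiuError_hhatE_zero a b c d hKdiff hK0]
      linarith
    · rw [← pd2, pd2_baoRatiuError_hhatE_zero a b c d hKdiff hK0]
      linarith
  apply isQuadApproxSol_of_isBigO
  simpa using hsmooth.isBigO_norm_sub_sq (baoRatiuError_hhatE_zero a b c d hK0) hcrit

end hhatE

/-- Elliptic case: if `K` is `C²` with `K(0) = 2`, there exist (indeed infinitely many)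
cubic coefficients `(a,b,c,d)` for which the approximate solution `ĥ` has quadratic error. -/
theorem stmt3 (K : ℝ × ℝ → ℝ) (hK : ContDiff ℝ 2 K) (hK0 : K (0, 0) = 2) :
    (∃ a b c d : ℝ, IsQuadApproxSol K (hhatE a b c d)) ∧
    {p : ℝ × ℝ × ℝ × ℝ | IsQuadApproxSol K (hhatE p.1 p.2.1 p.2.2.1 p.2.2.2)}.Infinite := by
  rw [Prod.mk_zero_zero] at hK0
  -- with `b = 0` and `c = t` free, the two conditions of `isQuadApproxSol_hhatE` fix `a` and `d`
  let line : ℝ → ℝ × ℝ × ℝ × ℝ := fun t =>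
    ((4 + pd1 K 0 / 2 - 4 * t) / 30, 0, t, (6 + pd2 K 0 / 2 + 12 * t) / 12)
  have hline : ∀ t,
      IsQuadApproxSol K (hhatE (line t).1 (line t).2.1 (line t).2.2.1 (line t).2.2.2) :=
    fun t => isQuadApproxSol_hhatE _ _ _ _ hK.contDiffAt hK0 (by ring) (by ring)
  have hinj : Function.Injective line := fun s t hst => congrArg (fun p => p.2.2.1) hst
  exact ⟨⟨_, _, _, _, hline 0⟩, Set.infinite_of_injective_forall_mem hinj hline⟩
end

section
/- Let K : ℝ² → ℝ be C² with K(0) = −2. Then there exist real numbers a, b, c, d such that the function ĥ(x₁,x₂) := (1/2)x₁² − (1/2)x₂² + a x₁³ + b x₁² x₂ + c x₁ x₂² + d x₂³ satisfies: there are constants C > 0 and r > 0 with |det Hess ĥ(x) − (K(x)/2)(1 + 2∂₁ĥ(x) + |∇ĥ(x)|²)| ≤ C(x₁² + x₂²) for all |x| ≤ r. -/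
open Asymptotics Filter Topology

theorem isBigO_norm_sq_of_contDiff_two {E G : Type*} [NormedAddCommGroup E] [NormedSpace ℝ E]
    [NormedAddCommGroup G] [NormedSpace ℝ G] {F : E → G} (hF : ContDiff ℝ 2 F) (h0 : F 0 = 0)
    (hd : fderiv ℝ F 0 = 0) : F =O[𝓝 0] fun x => ‖x‖ ^ 2 := by
  have hFd : Differentiable ℝ F := hF.differentiable two_ne_zero
  have hD : fderiv ℝ F =O[𝓝 0] fun y => y := by
    simpa [hd] using
      ((hF.fderiv_right one_add_one_eq_two.le).differentiable one_ne_zero 0).isBigO_sub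
  obtain ⟨C, hC0, hC⟩ := hD.exists_nonneg
  obtain ⟨ε, hε, hball⟩ := Metric.eventually_nhds_iff_ball.1 hC.bound
  refine IsBigO.of_bound C ?_
  filter_upwards [Metric.ball_mem_nhds 0 hε] with x hx
  have hsub : Metric.closedBall (0 : E) ‖x‖ ⊆ Metric.ball 0 ε :=
    Metric.closedBall_subset_ball (by simpa using hx)
  have hmv := (convex_closedBall (0 : E) ‖x‖).norm_image_sub_le_of_norm_fderiv_le (C := C * ‖x‖)
    (fun y _ => hFd y)
    (fun y hy => (hball y (hsub hy)).trans (mul_le_mul_of_nonneg_left (by simpa using hy) hC0))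
    (Metric.mem_closedBall_self (norm_nonneg x)) (mem_closedBall_zero_iff.2 le_rfl)
  simpa [h0, sq, mul_assoc] using hmv

theorem fderiv_eq_zero_of_pd1_of_pd2 {f : ℝ × ℝ → ℝ} {x : ℝ × ℝ} (h1 : pd1 f x = 0)
    (h2 : pd2 f x = 0) : fderiv ℝ f x = 0 :=
  ContinuousLinearMap.prod_ext (ContinuousLinearMap.ext_ring (by simpa [pd1] using h1))
    (ContinuousLinearMap.ext_ring (by simpa [pd2] using h2))

theorem Prod.norm_sq_le_sum_sq (x : ℝ × ℝ) : ‖x‖ ^ 2 ≤ x.1 ^ 2 + x.2 ^ 2 := by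
  rw [Prod.norm_def, Real.norm_eq_abs, Real.norm_eq_abs]
  rcases max_cases |x.1| |x.2| with ⟨h, -⟩ | ⟨h, -⟩ <;> rw [h] <;>
    nlinarith [sq_abs x.1, sq_abs x.2, sq_nonneg x.1, sq_nonneg x.2]

theorem exists_bound_of_isBigO_norm_sq {F : ℝ × ℝ → ℝ} (hF : F =O[𝓝 0] fun x => ‖x‖ ^ 2) :
    ∃ C > (0 : ℝ), ∃ r > (0 : ℝ), ∀ x : ℝ × ℝ, Real.sqrt (x.1 ^ 2 + x.2 ^ 2) ≤ r →
      |F x| ≤ C * (x.1 ^ 2 + x.2 ^ 2) := by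
  obtain ⟨C, hC0, hC⟩ := hF.exists_pos
  obtain ⟨ε, hε, hball⟩ := Metric.eventually_nhds_iff_ball.1 hC.bound
  refine ⟨C, hC0, ε / 2, by positivity, fun x hx => ?_⟩
  have hxε : x ∈ Metric.ball 0 ε := by
    rw [mem_ball_zero_iff]
    calc ‖x‖ ≤ Real.sqrt (x.1 ^ 2 + x.2 ^ 2) := Real.le_sqrt_of_sq_le x.norm_sq_le_sum_sq
      _ < ε := by linarith
  simpa using
    (hball x hxε).trans (mul_le_mul_of_nonneg_left (by simpa using x.norm_sq_le_sum_sq) hC0.le)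

noncomputable def hyperbolicCubic (a b c d : ℝ) : ℝ × ℝ → ℝ := fun y =>
  (1 / 2) * y.1 ^ 2 - (1 / 2) * y.2 ^ 2 + a * y.1 ^ 3 + b * y.1 ^ 2 * y.2 + c * y.1 * y.2 ^ 2
    + d * y.2 ^ 3

noncomputable def baoRatiuDefect (K f : ℝ × ℝ → ℝ) (x : ℝ × ℝ) : ℝ :=
  detHess f x - K x / 2 * (1 + 2 * pd1 f x + (pd1 f x ^ 2 + pd2 f x ^ 2))

section HyperbolicCubic

variable (a b c d : ℝ)

theorem pd1_hyperbolicCubic : pd1 (hyperbolicCubic a b c d) =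
    fun y => y.1 + 3 * a * y.1 ^ 2 + 2 * b * y.1 * y.2 + c * y.2 ^ 2 := by
  ext y
  unfold pd1 hyperbolicCubic
  simp (disch := fun_prop) [fderiv_fun_add, fderiv_fun_sub, fderiv_fun_mul, fderiv_fun_pow,
    fderiv_fst, fderiv_snd]
  ring

theorem pd2_hyperbolicCubic : pd2 (hyperbolicCubic a b c d) =
    fun y => -y.2 + b * y.1 ^ 2 + 2 * c * y.1 * y.2 + 3 * d * y.2 ^ 2 := by
  ext y
  unfold pd2 hyperbolicCubic
  simp (disch := fun_prop) [fderiv_fun_add, fderiv_fun_sub, fderiv_fun_mul, fderiv_fun_pow,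
    fderiv_fst, fderiv_snd]
  ring

theorem detHess_hyperbolicCubic : detHess (hyperbolicCubic a b c d) = fun y =>
    (1 + 6 * a * y.1 + 2 * b * y.2) * (-1 + 2 * c * y.1 + 6 * d * y.2)
      - (2 * b * y.1 + 2 * c * y.2) ^ 2 := by
  ext y
  simp (disch := fun_prop) [detHess, pd1_hyperbolicCubic, pd2_hyperbolicCubic, pd1, pd2,
    fderiv_fun_add, fderiv_fun_mul, fderiv_fun_pow, fderiv_fst, fderiv_snd, fderiv_fun_neg]
  ring

end HyperbolicCubic

theorem isBigO_baoRatiuDefect_hyperbolicCubic {K : ℝ × ℝ → ℝ} (hK : ContDiff ℝ 2 K)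
    (hK0 : K 0 = -2) {a b c d : ℝ} (hc : 2 * c - 6 * a + 2 = pd1 K 0 / 2)
    (hd : 6 * d - 2 * b = pd2 K 0 / 2) :
    baoRatiuDefect K (hyperbolicCubic a b c d) =O[𝓝 0] fun x => ‖x‖ ^ 2 := by
  have hKd : Differentiable ℝ K := hK.differentiable two_ne_zero
  unfold baoRatiuDefect
  simp only [detHess_hyperbolicCubic, pd1_hyperbolicCubic, pd2_hyperbolicCubic]
  refine isBigO_norm_sq_of_contDiff_two (by fun_prop) (by simp [hK0])
    (fderiv_eq_zero_of_pd1_of_pd2 ?_ ?_)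
  · unfold pd1 at hc ⊢
    simp (disch := fun_prop) [fderiv_fun_add, fderiv_fun_sub, fderiv_fun_mul, fderiv_fun_pow,
      fderiv_fst, fderiv_snd, fderiv_fun_neg, div_eq_mul_inv, hK0]
    linarith
  · unfold pd2 at hd ⊢
    simp (disch := fun_prop) [fderiv_fun_add, fderiv_fun_sub, fderiv_fun_mul, fderiv_fun_pow,
      fderiv_fst, fderiv_snd, fderiv_fun_neg, div_eq_mul_inv, hK0]
    linarith

/-- Hyperbolic case: if `K` is `C²` with `K(0) = −2`, there exist cubic coefficients
`(a,b,c,d)` such that `ĥ(x) = x₁²/2 − x₂²/2 + a x₁³ + b x₁²x₂ + c x₁x₂² + d x₂³`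
solves the Euclidean-model Bao–Ratiu Monge–Ampère equation up to a quadratic error. -/
theorem stmt4 (K : ℝ × ℝ → ℝ) (hK : ContDiff ℝ 2 K) (hK0 : K (0, 0) = -2) :
    ∃ a b c d : ℝ,
      ∃ C > (0 : ℝ), ∃ r > (0 : ℝ), ∀ x : ℝ × ℝ, Real.sqrt (x.1 ^ 2 + x.2 ^ 2) ≤ r →
        |detHess (fun y => (1 / 2) * y.1 ^ 2 - (1 / 2) * y.2 ^ 2
              + a * y.1 ^ 3 + b * y.1 ^ 2 * y.2 + c * y.1 * y.2 ^ 2 + d * y.2 ^ 3) x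
            - K x / 2 *
              (1 + 2 * pd1 (fun y => (1 / 2) * y.1 ^ 2 - (1 / 2) * y.2 ^ 2
                    + a * y.1 ^ 3 + b * y.1 ^ 2 * y.2 + c * y.1 * y.2 ^ 2 + d * y.2 ^ 3) x
                + ((pd1 (fun y => (1 / 2) * y.1 ^ 2 - (1 / 2) * y.2 ^ 2
                      + a * y.1 ^ 3 + b * y.1 ^ 2 * y.2 + c * y.1 * y.2 ^ 2 + d * y.2 ^ 3) x) ^ 2
                  + (pd2 (fun y => (1 / 2) * y.1 ^ 2 - (1 / 2) * y.2 ^ 2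
                      + a * y.1 ^ 3 + b * y.1 ^ 2 * y.2 + c * y.1 * y.2 ^ 2 + d * y.2 ^ 3) x) ^ 2))|
          ≤ C * (x.1 ^ 2 + x.2 ^ 2) :=
  ⟨0, 0, pd1 K 0 / 4 - 1, pd2 K 0 / 12, exists_bound_of_isBigO_norm_sq
    (isBigO_baoRatiuDefect_hyperbolicCubic hK hK0 (by ring) (by ring))⟩
end
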